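/- Pointwise posterior density-ratio bound implied by the proof of the ABC theorem: let M be a finite set of models with prior pmf β, H a finite history set, P : M → H → ℝ a likelihood with P m z > 0 for all m, z, observed history h ∈ H with φ(h) = ∑_m β m · P m h > 0, f : H → W a statistic into a real normed space, ε ≥ 0, A_ε = {z ∈ H : ‖f z − f h‖ ≤ ε}, P m (A_ε) = ∑_{z∈A_ε} P m z, φ(A_ε) = ∑_m β m · P m (A_ε); define β(m|h) = β m · P m h / φ(h) and β_ε(m|h) = β m · P m (A_ε) / φ(A_ε). If the Lipschitz assumption holds with constant L > 0 (for all m and z, x ∈ H, |ln(P m z / P m x)| ≤ L ‖f z − f x‖), then for every m ∈ M with β m > 0, β(m|h) / β_ε(m|h) ≤ |A_ε| · e^{2Lε}. -/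

import Mathlib

/-!
The ratio of the two posteriors factors as `(P m h / P m (A_ε)) · (φ(A_ε) / φ(h))`. The first
factor is at most `1` since `h ∈ A_ε`. On `A_ε` the Lipschitz bound gives `P m z ≤ e^{Lε} P m h`,
so `P m (A_ε) ≤ |A_ε| e^{Lε} P m h` for every model, and averaging over the prior bounds the
second factor by `|A_ε| e^{Lε} ≤ |A_ε| e^{2Lε}`.
-/

open scoped Classical
open Finset Real

section Bayes

variable {M : Type*} [Fintype M]

/-- The paper's `φ`: `φ(h) = evidence β (P · h)` and `φ(A_ε) = evidence β (fun m => P m (A_ε))`. -/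
noncomputable def evidence (β ℓ : M → ℝ) : ℝ := ∑ m, β m * ℓ m

noncomputable def posterior (β ℓ : M → ℝ) (m : M) : ℝ := β m * ℓ m / evidence β ℓ

theorem evidence_pos {β ℓ : M → ℝ} (hβ : ∀ m, 0 ≤ β m) (hℓ : ∀ m, 0 < ℓ m) {m : M}
    (hm : 0 < β m) : 0 < evidence β ℓ :=
  sum_pos' (fun m' _ => mul_nonneg (hβ m') (hℓ m').le) ⟨m, mem_univ m, mul_pos hm (hℓ m)⟩

theorem evidence_le_mul_evidence {β ℓ ℓ' : M → ℝ} {c : ℝ} (hβ : ∀ m, 0 ≤ β m)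
    (hℓ : ∀ m, ℓ m ≤ c * ℓ' m) : evidence β ℓ ≤ c * evidence β ℓ' := by
  rw [evidence, evidence, mul_sum]
  refine sum_le_sum fun m _ => ?_
  calc β m * ℓ m ≤ β m * (c * ℓ' m) := mul_le_mul_of_nonneg_left (hℓ m) (hβ m)
    _ = c * (β m * ℓ' m) := by ring

theorem posterior_div_posterior {β : M → ℝ} (ℓ ℓ' : M → ℝ) {m : M} (hm : β m ≠ 0) :
    posterior β ℓ m / posterior β ℓ' m = ℓ m / ℓ' m * (evidence β ℓ' / evidence β ℓ) := by
  simp only [posterior]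
  field_simp

end Bayes

theorem le_exp_mul_of_log_div_le {a b c : ℝ} (ha : 0 < a) (hb : 0 < b)
    (h : log (a / b) ≤ c) : a ≤ exp c * b := by
  rwa [log_le_iff_le_exp (div_pos ha hb), div_le_iff₀ hb] at h

section Region

variable {H W : Type*} [Fintype H] [NormedAddCommGroup W]

noncomputable def abcRegion (f : H → W) (h : H) (ε : ℝ) : Finset H :=
  univ.filter fun z => ‖f z - f h‖ ≤ ε

theorem mem_abcRegion_self (f : H → W) (h : H) {ε : ℝ} (hε : 0 ≤ ε) : h ∈ abcRegion f h ε := by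
  simp [abcRegion, hε]

theorem sum_abcRegion_le {p : H → ℝ} {f : H → W} {h : H} {ε L : ℝ} (hp : ∀ z, 0 < p z)
    (hL : 0 ≤ L) (hLip : ∀ z, log (p z / p h) ≤ L * ‖f z - f h‖) :
    ∑ z ∈ abcRegion f h ε, p z ≤ #(abcRegion f h ε) * exp (L * ε) * p h := by
  rw [mul_assoc, ← nsmul_eq_mul]
  refine sum_le_card_nsmul _ _ _ fun z hz => le_exp_mul_of_log_div_le (hp z) (hp h) ?_
  have hzε : ‖f z - f h‖ ≤ ε := (mem_filter.mp hz).2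
  exact (hLip z).trans (mul_le_mul_of_nonneg_left hzε hL)

end Region

theorem abc_posterior_ratio_bound_general
    {M H W : Type*} [Fintype M] [Fintype H]
    [NormedAddCommGroup W]
    (β : M → ℝ) (P : M → H → ℝ) (h : H) (f : H → W) (ε L : ℝ)
    (hβ : ∀ m, 0 ≤ β m)
    (hP : ∀ m z, 0 < P m z)
    (hε : 0 ≤ ε) (hL : 0 < L)
    (hLip : ∀ m z x, |Real.log (P m z / P m x)| ≤ L * ‖f z - f x‖) :
    ∀ m : M, 0 < β m →
      (β m * P m h / (∑ m', β m' * P m' h)) /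
          (β m * (∑ z ∈ Finset.univ.filter (fun z : H => ‖f z - f h‖ ≤ ε), P m z) /
            (∑ m', β m' *
              ∑ z ∈ Finset.univ.filter (fun z : H => ‖f z - f h‖ ≤ ε), P m' z))
        ≤ ((Finset.univ.filter (fun z : H => ‖f z - f h‖ ≤ ε)).card : ℝ) *
            Real.exp (2 * L * ε) := by
  intro m hm
  set A := abcRegion f h ε
  have hA : h ∈ A := mem_abcRegion_self f h hε
  have hmass_pos : ∀ m', 0 < ∑ z ∈ A, P m' z := fun m' => sum_pos (fun z _ => hP m' z) ⟨h, hA⟩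
  have hmass_le : ∀ m', ∑ z ∈ A, P m' z ≤ #A * exp (L * ε) * P m' h := fun m' =>
    sum_abcRegion_le (hP m') hL.le fun z => (le_abs_self _).trans (hLip m' z h)
  have hφ : 0 < evidence β (P · h) := evidence_pos hβ (hP · h) hm
  change posterior β (P · h) m / posterior β (fun m' => ∑ z ∈ A, P m' z) m ≤ #A * exp (2 * L * ε)
  rw [posterior_div_posterior _ _ hm.ne']
  calc (P m h / ∑ z ∈ A, P m z) * (evidence β (fun m' => ∑ z ∈ A, P m' z) / evidence β (P · h))
      ≤ 1 * (#A * exp (L * ε)) := by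
        refine mul_le_mul ?_ ?_ (div_nonneg (evidence_pos hβ hmass_pos hm).le hφ.le) zero_le_one
        · exact div_le_one_of_le₀ (single_le_sum (fun z _ => (hP m z).le) hA) (hmass_pos m).le
        · exact (div_le_iff₀ hφ).mpr (evidence_le_mul_evidence hβ hmass_le)
    _ ≤ #A * exp (2 * L * ε) := by
        rw [one_mul]
        gcongr
        nlinarith

/-- Pointwise posterior density-ratio bound: under the Lipschitz assumption,
for every model `m` with positive prior mass,
`β(m|h) / β_ε(m|h) ≤ |A_ε| · e^{2Lε}`. -/
theorem abc_posterior_ratio_bound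
    {M H W : Type*} [Fintype M] [Fintype H]
    [NormedAddCommGroup W] [NormedSpace ℝ W]
    (β : M → ℝ) (P : M → H → ℝ) (h : H) (f : H → W) (ε L : ℝ)
    (hβ : ∀ m, 0 ≤ β m) (hβsum : ∑ m, β m = 1)
    (hP : ∀ m z, 0 < P m z)
    (hε : 0 ≤ ε) (hL : 0 < L)
    (hφ : 0 < ∑ m, β m * P m h)
    (hLip : ∀ m z x, |Real.log (P m z / P m x)| ≤ L * ‖f z - f x‖) :
    ∀ m : M, 0 < β m →
      (β m * P m h / (∑ m', β m' * P m' h)) /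
          (β m * (∑ z ∈ Finset.univ.filter (fun z : H => ‖f z - f h‖ ≤ ε), P m z) /
            (∑ m', β m' *
              ∑ z ∈ Finset.univ.filter (fun z : H => ‖f z - f h‖ ≤ ε), P m' z))
        ≤ ((Finset.univ.filter (fun z : H => ‖f z - f h‖ ≤ ε)).card : ℝ) *
            Real.exp (2 * L * ε) :=
  abc_posterior_ratio_bound_general β P h f ε L hβ hP hε hL hLip
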